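/- arXiv:2404.13335 — 3 statements merged into one kernel-verified Lean document; each statement's English description precedes it below -/
import Mathlib

section
/- For every n-vertex graph G with no two vertex-disjoint copies of P_3 (i.e., G is 2P_3-free), if G has a vertex of degree at least 5, then G is a subgraph of the friendship graph F_n: the graph on n vertices consisting of one vertex adjacent to all others plus a matching on the remaining n-1 vertices. -/
open SimpleGraph Filter Finset

section Defs

variable {α β γ V : Type*}

/-- `H` has a copy in `G` (an injective edge-preserving map). -/
def Contains (H : SimpleGraph α) (G : SimpleGraph β) : Prop :=
  ∃ f : α ↪ β, ∀ a b, H.Adj a b → G.Adj (f a) (f b)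

/-- `G` is `F`-free: it contains no copy of `F`. -/
def Free (F : SimpleGraph γ) (G : SimpleGraph β) : Prop := ¬ Contains F G

/-- `N(H,G)`: the number of copies of `H` in `G`, i.e. subgraphs of `G` isomorphic to `H`. -/
noncomputable def copyCount (H : SimpleGraph α) (G : SimpleGraph β) : ℕ :=
  Set.ncard {G' : G.Subgraph | Nonempty (H ≃g G'.coe)}

/-- The generalized Turán number `ex(n,H,F)`. -/
noncomputable def exCount {α γ : Type*} (n : ℕ) (H : SimpleGraph α) (F : SimpleGraph γ) : ℕ :=
  sSup {N | ∃ G : SimpleGraph (Fin n), _root_.Free F G ∧ N = copyCount H G}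

/-- The Turán number `ex(n,F)`. -/
noncomputable def exEdge {γ : Type*} (n : ℕ) (F : SimpleGraph γ) : ℕ :=
  sSup {N | ∃ G : SimpleGraph (Fin n), _root_.Free F G ∧ N = G.edgeSet.ncard}

/-- The matching `M_t` with `t` independent edges. -/
def matchingGraph (t : ℕ) : SimpleGraph (Fin t × Fin 2) :=
  SimpleGraph.fromRel (fun a b => a.1 = b.1)

/-- Disjoint union of two graphs. -/
def disjUnion (G : SimpleGraph α) (H : SimpleGraph β) : SimpleGraph (α ⊕ β) :=
  SimpleGraph.fromRel (fun x y =>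
    (∃ a b, x = Sum.inl a ∧ y = Sum.inl b ∧ G.Adj a b) ∨
    (∃ a b, x = Sum.inr a ∧ y = Sum.inr b ∧ H.Adj a b))

/-- `a` vertex-disjoint copies of the clique `K_m`. -/
def multiClique (a m : ℕ) : SimpleGraph (Fin a × Fin m) :=
  SimpleGraph.fromRel (fun x y => x.1 = y.1)

/-- `H(n,2a+1,a)`: a clique on the first `a` vertices completely joined to the
remaining `n-a` independent vertices. -/
def splitGraph (n a : ℕ) : SimpleGraph (Fin n) :=
  SimpleGraph.fromRel (fun x y => (x : ℕ) < a)

/-- Degree of a vertex. -/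
noncomputable def deg (G : SimpleGraph V) (v : V) : ℕ := (G.neighborSet v).ncard

end Defs

/-- The friendship graph on `n` vertices: vertex `0` is adjacent to all others,
and the remaining `n-1` vertices carry a maximum matching `(1,2), (3,4), …`. -/
def friendshipGraph (n : ℕ) : SimpleGraph (Fin n) :=
  SimpleGraph.fromRel (fun x y => (x : ℕ) = 0 ∨ ((x : ℕ) % 2 = 1 ∧ (y : ℕ) = (x : ℕ) + 1))

lemma key {n : ℕ} {G : SimpleGraph (Fin n)} {v : Fin n}
    (hfree : _root_.Free (disjUnion (pathGraph 3) (pathGraph 3)) G)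
    (hv : 5 ≤ deg G v) {x a b : Fin n} (hx : x ≠ v)
    (ha : G.Adj x a) (hb : G.Adj x b) (hav : a ≠ v) (hbv : b ≠ v) : a = b := by
  classical
  by_contra hab
  have hdeg : 5 ≤ (G.neighborFinset v).card := by
    rw [neighborFinset_def, ← Set.ncard_eq_toFinset_card']
    exact hv
  have h2 : 1 < ((G.neighborFinset v) \ {a, x, b}).card := by
    have h1 := Finset.card_le_card_sdiff_add_card (s := G.neighborFinset v)
      (t := ({a, x, b} : Finset (Fin n)))
    have h3 : ({a, x, b} : Finset (Fin n)).card ≤ 3 := by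
      apply le_trans (Finset.card_insert_le _ _)
      have := Finset.card_insert_le x ({b} : Finset (Fin n))
      simp at this ⊢
      omega
    omega
  obtain ⟨c, hc, d, hd, hcd⟩ := Finset.one_lt_card.mp h2
  simp only [Finset.mem_sdiff, mem_neighborFinset, Finset.mem_insert, Finset.mem_singleton] at hc hd
  push_neg at hc hd
  obtain ⟨hcv, hca, hcx, hcb⟩ := hc
  obtain ⟨hdv, hda, hdx, hdb⟩ := hd
  apply hfree
  have hinj : Function.Injective (Sum.elim (![a, x, b]) (![c, v, d]) : Fin 3 ⊕ Fin 3 → Fin n) := by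
    have hax : a ≠ x := ha.ne'
    have hbx : b ≠ x := hb.ne'
    have hva : v ≠ a := fun h => hav h.symm
    have hvb : v ≠ b := fun h => hbv h.symm
    have hvx : v ≠ x := fun h => hx h.symm
    have hcv' : c ≠ v := hcv.ne'
    have hdv' : d ≠ v := hdv.ne'
    intro p q h
    rcases p with i | i <;> rcases q with j | j <;> fin_cases i <;> fin_cases j <;>
      simp_all [Fin.isValue]
  refine ⟨⟨_, hinj⟩, ?_⟩
  intro p q hpq
  rw [_root_.disjUnion, fromRel_adj] at hpq
  obtain ⟨hne, hrel⟩ := hpq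
  have main : ∀ (u w : Fin 3), (pathGraph 3).Adj u w →
      G.Adj (![a,x,b] u) (![a,x,b] w) ∧ G.Adj (![c,v,d] u) (![c,v,d] w) := by
    intro u w huw
    rw [pathGraph_adj] at huw
    have hu := u.isLt; have hw := w.isLt
    have hc2 : ((u:ℕ) = 0 ∧ (w:ℕ) = 1) ∨ ((u:ℕ) = 1 ∧ (w:ℕ) = 0) ∨ ((u:ℕ) = 1 ∧ (w:ℕ) = 2)
        ∨ ((u:ℕ) = 2 ∧ (w:ℕ) = 1) := by omega
    rcases hc2 with ⟨h1,h2⟩|⟨h1,h2⟩|⟨h1,h2⟩|⟨h1,h2⟩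
    · have hu1 : u = 0 := by omega
      have hw1 : w = 1 := by omega
      subst hu1 hw1
      exact ⟨by simpa using ha.symm, by simpa using hcv.symm⟩
    · have hu1 : u = 1 := by omega
      have hw1 : w = 0 := by omega
      subst hu1 hw1
      exact ⟨by simpa using ha, by simpa using hcv⟩
    · have hu1 : u = 1 := by omega
      have hw1 : w = 2 := by omega
      subst hu1 hw1
      exact ⟨by simpa using hb, by simpa using hdv⟩
    · have hu1 : u = 2 := by omega
      have hw1 : w = 1 := by omega
      subst hu1 hw1
      exact ⟨by simpa using hb.symm, by simpa using hdv.symm⟩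
  rcases hrel with (⟨u, w, hp, hq, huw⟩ | ⟨u, w, hp, hq, huw⟩) | (⟨u, w, hq, hp, huw⟩ | ⟨u, w, hq, hp, huw⟩) <;>
    subst hp <;> subst hq <;> simp only [Function.Embedding.coeFn_mk, Sum.elim_inl, Sum.elim_inr]
  · exact (main u w huw).1
  · exact (main u w huw).2
  · exact ((main u w huw).1).symm
  · exact ((main u w huw).2).symm


set_option maxHeartbeats 1000000 in
/-- A `2P_3`-free graph with a vertex of degree at least 5 is a subgraph of the
friendship graph. -/
theorem stmt5 {n : ℕ} (G : SimpleGraph (Fin n))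
    (hfree : _root_.Free (disjUnion (pathGraph 3) (pathGraph 3)) G)
    (hdeg : ∃ v : Fin n, 5 ≤ deg G v) :
    Contains G (friendshipGraph n) := by
  classical
  obtain ⟨v, hv⟩ := hdeg
  have key' : ∀ {x a b : Fin n}, x ≠ v → G.Adj x a → G.Adj x b → a ≠ v → b ≠ v → a = b :=
    fun hx ha hb hav hbv => key hfree hv hx ha hb hav hbv
  -- the mate function
  set m : Fin n → Fin n := fun x => if h : ∃ y, y ≠ v ∧ G.Adj x y then h.choose else x with hm
  set matched : Finset (Fin n) :=
    Finset.univ.filter (fun x => x ≠ v ∧ ∃ y, y ≠ v ∧ G.Adj x y) with hmatched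
  have mem_matched : ∀ {x : Fin n}, x ∈ matched ↔ x ≠ v ∧ ∃ y, y ≠ v ∧ G.Adj x y := by
    intro x; simp [hmatched]
  have mspec : ∀ {x : Fin n}, x ∈ matched → G.Adj x (m x) ∧ m x ≠ v := by
    intro x hx
    obtain ⟨hxv, hex⟩ := mem_matched.mp hx
    rw [hm]; simp only [dif_pos hex]
    exact ⟨hex.choose_spec.2, hex.choose_spec.1⟩
  have munique : ∀ {x y : Fin n}, x ∈ matched → G.Adj x y → y ≠ v → y = m x := by
    intro x y hx hxy hyv
    exact key' (mem_matched.mp hx).1 hxy (mspec hx).1 hyv (mspec hx).2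
  have mmem : ∀ {x : Fin n}, x ∈ matched → m x ∈ matched := by
    intro x hx
    exact mem_matched.mpr ⟨(mspec hx).2, x, (mem_matched.mp hx).1, (mspec hx).1.symm⟩
  have minv : ∀ {x : Fin n}, x ∈ matched → m (m x) = x := by
    intro x hx
    exact (munique (mmem hx) (mspec hx).1.symm (mem_matched.mp hx).1).symm
  have mne : ∀ {x : Fin n}, x ∈ matched → m x ≠ x := fun hx => (mspec hx).1.ne'
  have hvnm : v ∉ matched := by simp [hmatched]
  set P : Finset (Fin n) := matched.filter (fun x => x < m x) with hP
  set Q : Finset (Fin n) := matched.filter (fun x => m x < x) with hQ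
  have hPm : ∀ {x}, x ∈ P → x ∈ matched := fun hx => (Finset.mem_filter.mp hx).1
  have hPv : ∀ {x}, x ∈ P → x ≠ v := fun hx => (mem_matched.mp (hPm hx)).1
  have hPQunion : matched = P ∪ Q := by
    ext x
    simp only [hP, hQ, Finset.mem_union, Finset.mem_filter]
    constructor
    · intro hx
      rcases (mne hx).lt_or_gt with h | h
      · exact Or.inr ⟨hx, h⟩
      · exact Or.inl ⟨hx, h⟩
    · rintro (⟨hx, -⟩ | ⟨hx, -⟩) <;> exact hx
  have hPQdisj : Disjoint P Q := by
    rw [Finset.disjoint_left]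
    intro x h1 h2
    rw [hP, Finset.mem_filter] at h1
    rw [hQ, Finset.mem_filter] at h2
    exact absurd h2.2 (not_lt_of_gt h1.2)
  have hQP : Q = P.image m := by
    ext y
    simp only [hP, hQ, Finset.mem_filter, Finset.mem_image]
    constructor
    · intro ⟨hy, hlt⟩
      exact ⟨m y, ⟨mmem hy, by rw [minv hy]; exact hlt⟩, minv hy⟩
    · rintro ⟨x, ⟨hx, hlt⟩, rfl⟩
      exact ⟨mmem hx, by rw [minv hx]; exact hlt⟩
  have hQcard : Q.card = P.card := by
    rw [hQP]
    apply Finset.card_image_of_injOn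
    intro x hx y hy hxy
    have hx' : x ∈ matched := hPm hx
    have hy' : y ∈ matched := hPm hy
    rw [← minv hx', hxy, minv hy']
  have hmc : matched.card = 2 * P.card := by
    rw [hPQunion, Finset.card_union_of_disjoint hPQdisj]
    omega
  set k := P.card with hk
  have hn1 : 2 * k + 1 ≤ n := by
    have h1 := Finset.card_le_univ (insert v matched)
    rw [Finset.card_insert_of_notMem hvnm, hmc, Fintype.card_fin] at h1
    omega
  set idx : Fin n → ℕ := fun x => (P.sort (·≤·)).idxOf x with hidx
  have idx_lt : ∀ {x}, x ∈ P → idx x < k := by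
    intro x hx
    have := List.idxOf_lt_length_iff.mpr ((Finset.mem_sort (α := Fin n) (·≤·)).mpr hx)
    rwa [Finset.length_sort] at this
  have idx_inj : ∀ {x y}, x ∈ P → y ∈ P → idx x = idx y → x = y := by
    intro x y hx hy h
    exact (List.idxOf_inj ((Finset.mem_sort (α := Fin n) (·≤·)).mpr hx)).mp h
  set R : Finset (Fin n) := Finset.univ \ insert v matched with hR
  have mem_R : ∀ {x}, x ∈ R ↔ x ≠ v ∧ x ∉ matched := by
    intro x; simp [hR, not_or]
  have hRcard : R.card = n - (2*k+1) := by
    rw [hR, Finset.card_sdiff_of_subset (Finset.subset_univ _),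
      Finset.card_insert_of_notMem hvnm, hmc, Finset.card_univ, Fintype.card_fin]
  set ridx : Fin n → ℕ := fun x => (R.sort (·≤·)).idxOf x with hridx
  have ridx_lt : ∀ {x}, x ∈ R → ridx x < n - (2*k+1) := by
    intro x hx
    have := List.idxOf_lt_length_iff.mpr ((Finset.mem_sort (α := Fin n) (·≤·)).mpr hx)
    rwa [Finset.length_sort, hRcard] at this
  have ridx_inj : ∀ {x y}, x ∈ R → y ∈ R → ridx x = ridx y → x = y := by
    intro x y hx hy h
    exact (List.idxOf_inj ((Finset.mem_sort (α := Fin n) (·≤·)).mpr hx)).mp h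
  have mP : ∀ {x}, x ∈ matched → x ∉ P → m x ∈ P := by
    intro x hx hxP
    rw [hP, Finset.mem_filter]
    refine ⟨mmem hx, ?_⟩
    rw [minv hx]
    by_cases h : x < m x
    · exact absurd (by rw [hP]; exact Finset.mem_filter.mpr ⟨hx, h⟩) hxP
    · rcases (mne hx).lt_or_gt with h2 | h2
      · exact h2
      · exact absurd h2 h
  set g : Fin n → ℕ := fun x =>
    if x = v then 0
    else if x ∈ P then 2 * idx x + 1
    else if x ∈ matched then 2 * idx (m x) + 2
    else 2 * k + 1 + ridx x with hg
  have gv : g v = 0 := by simp [hg]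
  have gP : ∀ {x}, x ∈ P → g x = 2 * idx x + 1 := by
    intro x hx
    rw [hg]
    simp only [if_neg (hPv hx), if_pos hx]
  have gQ : ∀ {x}, x ∈ matched → x ∉ P → g x = 2 * idx (m x) + 2 := by
    intro x hx hxP
    rw [hg]
    simp only [if_neg (mem_matched.mp hx).1, if_neg hxP, if_pos hx]
  have gR : ∀ {x}, x ≠ v → x ∉ matched → g x = 2 * k + 1 + ridx x := by
    intro x h1 h2
    have h3 : x ∉ P := fun h => h2 (hPm h)
    rw [hg]
    simp only [if_neg h1, if_neg h3, if_neg h2]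
  have gbound : ∀ x, g x < n := by
    intro x
    rcases eq_or_ne x v with rfl | h1
    · rw [gv]; omega
    by_cases h2 : x ∈ P
    · rw [gP h2]; have := idx_lt h2; omega
    by_cases h3 : x ∈ matched
    · rw [gQ h3 h2]; have := idx_lt (mP h3 h2); omega
    · rw [gR h1 h3]; have := ridx_lt (mem_R.mpr ⟨h1, h3⟩); omega
  have gclass : ∀ x : Fin n, x = v ∨ x ∈ P ∨ (x ∈ matched ∧ x ∉ P) ∨ (x ≠ v ∧ x ∉ matched) := by
    intro x
    by_cases h1 : x = v
    · exact Or.inl h1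
    by_cases h2 : x ∈ P
    · exact Or.inr (Or.inl h2)
    by_cases h3 : x ∈ matched
    · exact Or.inr (Or.inr (Or.inl ⟨h3, h2⟩))
    · exact Or.inr (Or.inr (Or.inr ⟨h1, h3⟩))
  have ginj : Function.Injective g := by
    intro x y h
    rcases gclass x with rfl | hx | ⟨hx, hx'⟩ | ⟨hx, hx'⟩ <;>
      rcases gclass y with rfl | hy | ⟨hy, hy'⟩ | ⟨hy, hy'⟩
    · rfl
    · rw [gv, gP hy] at h; omega
    · rw [gv, gQ hy hy'] at h; omega
    · rw [gv, gR hy hy'] at h; omega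
    · rw [gv, gP hx] at h; omega
    · rw [gP hx, gP hy] at h
      exact idx_inj hx hy (by omega)
    · rw [gP hx, gQ hy hy'] at h; omega
    · rw [gP hx, gR hy hy'] at h
      have := idx_lt hx; omega
    · rw [gv, gQ hx hx'] at h; omega
    · rw [gQ hx hx', gP hy] at h; omega
    · rw [gQ hx hx', gQ hy hy'] at h
      have h2 : m x = m y := idx_inj (mP hx hx') (mP hy hy') (by omega)
      rw [← minv hx, h2, minv hy]
    · rw [gQ hx hx', gR hy hy'] at h
      have := idx_lt (mP hx hx'); omega
    · rw [gv, gR hx hx'] at h; omega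
    · rw [gR hx hx', gP hy] at h
      have := idx_lt hy; omega
    · rw [gR hx hx', gQ hy hy'] at h
      have := idx_lt (mP hy hy'); omega
    · rw [gR hx hx', gR hy hy'] at h
      exact ridx_inj (mem_R.mpr ⟨hx, hx'⟩) (mem_R.mpr ⟨hy, hy'⟩) (by omega)
  set f : Fin n → Fin n := fun x => ⟨g x, gbound x⟩ with hf
  have finj : Function.Injective f := by
    intro x y h
    apply ginj
    have := congrArg Fin.val h
    exact this
  refine ⟨⟨f, finj⟩, ?_⟩
  intro a b hab
  have hfab : f a ≠ f b := fun h => hab.ne (finj h)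
  rw [friendshipGraph, fromRel_adj]
  refine ⟨hfab, ?_⟩
  simp only [Function.Embedding.coeFn_mk]
  have hval : ∀ x, ((f x : Fin n) : ℕ) = g x := fun x => rfl
  rcases eq_or_ne a v with rfl | hav
  · left; left; exact gv
  rcases eq_or_ne b v with rfl | hbv
  · right; left; exact gv
  -- both non-central: matched pair
  have ham : a ∈ matched := mem_matched.mpr ⟨hav, b, hbv, hab⟩
  have hbm : b ∈ matched := mem_matched.mpr ⟨hbv, a, hav, hab.symm⟩
  have hba : b = m a := munique ham hab hbv
  have hab' : a = m b := munique hbm hab.symm hav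
  rcases hab.ne.lt_or_gt with hlt | hlt
  · -- a < b, so a ∈ P
    have haP : a ∈ P := Finset.mem_filter.mpr ⟨ham, by rw [← hba]; exact hlt⟩
    have hbP : b ∉ P := by
      intro hbP
      have := (Finset.mem_filter.mp hbP).2
      rw [← hab'] at this
      exact absurd hlt (not_lt_of_gt this)
    left; right
    rw [hval a, hval b, gP haP, gQ hbm hbP, ← hab']
    omega
  · -- b < a, so b ∈ P
    have hbP : b ∈ P := Finset.mem_filter.mpr ⟨hbm, by rw [← hab']; exact hlt⟩
    have haP : a ∉ P := by
      intro haP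
      have := (Finset.mem_filter.mp haP).2
      rw [← hba] at this
      exact absurd hlt (not_lt_of_gt this)
    right; right
    rw [hval a, hval b, gP hbP, gQ ham haP, ← hba]
    omega
end

section
/- Let G be an n-vertex graph with no matching of size s, and suppose that in G, every vertex of some set A of size at most s−1 cuts G into odd components witnessing the Berge–Tutte condition. If every vertex of G appearing in a copy of a graph H (in which all vertices have degree ≥ s) lies in A ∪ V(G_i) for some single component G_i, then every copy of H in G spans at most 2s−1 vertices. Consequently, if δ(H) ≥ s, any M_s-free graph G and any copy of H in G satisfy: the copy lies inside a set of at most 2s−1 vertices of G. -/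
open SimpleGraph Filter Finset

section Aux

variable {α : Type*} [Fintype α] [DecidableEq α]

/-- A matching encoded as a finset of ordered pairs with pairwise distinct endpoints. -/
def IsM (H : SimpleGraph α) (M : Finset (α × α)) : Prop :=
  (∀ p ∈ M, H.Adj p.1 p.2) ∧
  ∀ p ∈ M, ∀ q ∈ M, p ≠ q →
    p.1 ≠ q.1 ∧ p.1 ≠ q.2 ∧ p.2 ≠ q.1 ∧ p.2 ≠ q.2

/-- The set of matched vertices. -/
def mSet (M : Finset (α × α)) : Finset α := M.biUnion (fun p => {p.1, p.2})

omit [Fintype α] in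
lemma mem_mSet {M : Finset (α × α)} {v : α} :
    v ∈ mSet M ↔ ∃ p ∈ M, v = p.1 ∨ v = p.2 := by
  simp [mSet]

omit [Fintype α] in
lemma card_mSet_le {M : Finset (α × α)} : (mSet M).card ≤ 2 * M.card := by
  refine (Finset.card_biUnion_le).trans ?_
  calc ∑ p ∈ M, ({p.1, p.2} : Finset α).card ≤ ∑ _p ∈ M, 2 := by
        refine Finset.sum_le_sum fun p _ => ?_
        exact (Finset.card_insert_le _ _).trans (by simp)
    _ = 2 * M.card := by rw [Finset.sum_const, smul_eq_mul, mul_comm]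

omit [Fintype α] [DecidableEq α] in
lemma IsM.subs {H : SimpleGraph α} {M M' : Finset (α × α)} (h : IsM H M) (hs : M' ⊆ M) :
    IsM H M' :=
  ⟨fun p hp => h.1 p (hs hp), fun p hp q hq => h.2 p (hs hp) q (hs hq)⟩

omit [Fintype α] in
lemma augment_s13 {H : SimpleGraph α} {M : Finset (α × α)} (hM : IsM H M)
    (hmax : ∀ M', IsM H M' → M'.card ≤ M.card)
    {u v : α} (hu : u ∉ mSet M) (hv : v ∉ mSet M) (huv : u ≠ v)
    {p : α × α} (hp : p ∈ M) {x y : α}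
    (hx : x = p.1 ∨ x = p.2) (hy : y = p.1 ∨ y = p.2) (hxy : x ≠ y)
    (hux : H.Adj u x) (hvy : H.Adj v y) : False := by
  set M' := insert (u, x) (insert (v, y) (M.erase p)) with hM'def
  have hxM : x ∈ mSet M := mem_mSet.2 ⟨p, hp, hx⟩
  have hyM : y ∈ mSet M := mem_mSet.2 ⟨p, hp, hy⟩
  have hUY : u ≠ y := fun h => hu (h ▸ hyM)
  have hVX : v ≠ x := fun h => hv (h ▸ hxM)
  have hq : ∀ q ∈ M.erase p, q.1 ≠ u ∧ q.1 ≠ v ∧ q.1 ≠ x ∧ q.1 ≠ y ∧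
      q.2 ≠ u ∧ q.2 ≠ v ∧ q.2 ≠ x ∧ q.2 ≠ y := by
    intro q hqe
    obtain ⟨hqp, hqM⟩ := Finset.mem_erase.1 hqe
    have h1 : q.1 ∈ mSet M := mem_mSet.2 ⟨q, hqM, Or.inl rfl⟩
    have h2 : q.2 ∈ mSet M := mem_mSet.2 ⟨q, hqM, Or.inr rfl⟩
    have hd := hM.2 q hqM p hp hqp
    refine ⟨fun h => hu (h ▸ h1), fun h => hv (h ▸ h1), ?_, ?_,
      fun h => hu (h ▸ h2), fun h => hv (h ▸ h2), ?_, ?_⟩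
    · rcases hx with rfl | rfl; exacts [hd.1, hd.2.1]
    · rcases hy with rfl | rfl; exacts [hd.1, hd.2.1]
    · rcases hx with rfl | rfl; exacts [hd.2.2.1, hd.2.2.2]
    · rcases hy with rfl | rfl; exacts [hd.2.2.1, hd.2.2.2]
  have hIsM' : IsM H M' := by
    constructor
    · intro r hr
      rcases Finset.mem_insert.1 hr with rfl | hr
      · exact hux
      rcases Finset.mem_insert.1 hr with rfl | hr
      · exact hvy
      · exact hM.1 r (Finset.mem_of_mem_erase hr)
    · intro r hr r' hr' hne
      rcases Finset.mem_insert.1 hr with rfl | hr <;>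
        [skip; rcases Finset.mem_insert.1 hr with rfl | hr] <;>
        (rcases Finset.mem_insert.1 hr' with rfl | hr' <;>
          [skip; rcases Finset.mem_insert.1 hr' with rfl | hr'])
      · exact absurd rfl hne
      · exact ⟨huv, hUY, hVX.symm, hxy⟩
      · have := hq _ hr'
        exact ⟨this.1.symm, this.2.2.2.2.1.symm, this.2.2.1.symm, this.2.2.2.2.2.2.1.symm⟩
      · exact ⟨huv.symm, hVX, hUY.symm, hxy.symm⟩
      · exact absurd rfl hne
      · have := hq _ hr'
        exact ⟨this.2.1.symm, this.2.2.2.2.2.1.symm, this.2.2.2.1.symm,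
          this.2.2.2.2.2.2.2.symm⟩
      · have := hq _ hr
        exact ⟨this.1, this.2.2.1, this.2.2.2.2.1, this.2.2.2.2.2.2.1⟩
      · have := hq _ hr
        exact ⟨this.2.1, this.2.2.2.1, this.2.2.2.2.2.1, this.2.2.2.2.2.2.2⟩
      · exact hM.2 r (Finset.mem_of_mem_erase hr) r' (Finset.mem_of_mem_erase hr') hne
  have hvyE : (v, y) ∉ M.erase p := fun h =>
    hv (mem_mSet.2 ⟨_, Finset.mem_of_mem_erase h, Or.inl rfl⟩)
  have huxE : (u, x) ∉ insert (v, y) (M.erase p) := by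
    intro h
    rcases Finset.mem_insert.1 h with h | h
    · exact huv (congrArg Prod.fst h)
    · exact hu (mem_mSet.2 ⟨_, Finset.mem_of_mem_erase h, Or.inl rfl⟩)
  have hcard : M'.card = M.card + 1 := by
    rw [hM'def, Finset.card_insert_of_notMem huxE, Finset.card_insert_of_notMem hvyE,
      Finset.card_erase_of_mem hp]
    have : 1 ≤ M.card := Finset.card_pos.2 ⟨p, hp⟩
    omega
  have := hmax M' hIsM'
  omega

lemma cnt (H : SimpleGraph α) [DecidableRel H.Adj] (u x y : α) (hxy : x ≠ y) :
    ((H.neighborFinset u) ∩ ({x, y} : Finset α)).card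
      = (if H.Adj u x then 1 else 0) + (if H.Adj u y then 1 else 0) := by
  have h1 : (H.neighborFinset u) ∩ ({x, y} : Finset α)
      = ({x, y} : Finset α).filter (fun w => H.Adj u w) := by
    ext w; simp [and_comm]
  rw [h1, Finset.filter_insert, Finset.filter_singleton]
  split_ifs with h2 h3 h3
  · rw [Finset.card_insert_of_notMem (by simp [hxy])]; simp
  · simp
  · simp
  · simp

lemma key_s13 (H : SimpleGraph α) [DecidableRel H.Adj] (s : ℕ) (hdeg : ∀ v, s ≤ H.degree v)
    (hcard : 2 * s ≤ Fintype.card α) :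
    ∃ M : Finset (α × α), IsM H M ∧ M.card = s := by
  classical
  obtain ⟨M, hMmem, hmaxraw⟩ :=
    Finset.exists_max_image ((univ : Finset (Finset (α × α))).filter (fun M => IsM H M))
      Finset.card ⟨∅, by simp [IsM]⟩
  have hM : IsM H M := (Finset.mem_filter.1 hMmem).2
  have hmax : ∀ M', IsM H M' → M'.card ≤ M.card := fun M' h =>
    hmaxraw M' (Finset.mem_filter.2 ⟨Finset.mem_univ _, h⟩)
  suffices hts : s ≤ M.card by
    obtain ⟨M', hsub, hc⟩ := Finset.exists_subset_card_eq hts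
    exact ⟨M', hM.subs hsub, hc⟩
  by_contra hts
  push_neg at hts
  have hmle := card_mSet_le (M := M)
  have hU : 1 < (univ \ mSet M).card := by
    rw [Finset.card_sdiff_of_subset (Finset.subset_univ _), Finset.card_univ]
    omega
  obtain ⟨u, hu, v, hv, huv⟩ := Finset.one_lt_card.1 hU
  have hu' : u ∉ mSet M := (Finset.mem_sdiff.1 hu).2
  have hv' : v ∉ mSet M := (Finset.mem_sdiff.1 hv).2
  have hins : ∀ a b, a ∉ mSet M → b ∉ mSet M → ¬ H.Adj a b := by
    intro a b ha hb hab
    have habM : (a, b) ∉ M := fun h => ha (mem_mSet.2 ⟨_, h, Or.inl rfl⟩)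
    have : IsM H (insert (a, b) M) := by
      constructor
      · intro r hr
        rcases Finset.mem_insert.1 hr with rfl | hr
        · exact hab
        · exact hM.1 r hr
      · intro r hr r' hr' hne
        have hend : ∀ q ∈ M, q.1 ≠ a ∧ q.1 ≠ b ∧ q.2 ≠ a ∧ q.2 ≠ b := by
          intro q hq
          have h1 : q.1 ∈ mSet M := mem_mSet.2 ⟨q, hq, Or.inl rfl⟩
          have h2 : q.2 ∈ mSet M := mem_mSet.2 ⟨q, hq, Or.inr rfl⟩
          exact ⟨fun h => ha (h ▸ h1), fun h => hb (h ▸ h1),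
            fun h => ha (h ▸ h2), fun h => hb (h ▸ h2)⟩
        rcases Finset.mem_insert.1 hr with rfl | hr <;>
          rcases Finset.mem_insert.1 hr' with rfl | hr'
        · exact absurd rfl hne
        · have := hend _ hr'
          exact ⟨this.1.symm, this.2.2.1.symm, this.2.1.symm, this.2.2.2.symm⟩
        · have := hend _ hr
          exact ⟨this.1, this.2.1, this.2.2.1, this.2.2.2⟩
        · exact hM.2 r hr r' hr' hne
    have := hmax _ this
    rw [Finset.card_insert_of_notMem habM] at this
    omega
  have hNsub : ∀ z, z ∉ mSet M → H.neighborFinset z ⊆ mSet M := by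
    intro z hz w hw
    by_contra h
    exact hins z w hz h ((SimpleGraph.mem_neighborFinset _ _ _).1 hw)
  have hcover : ∀ z, z ∉ mSet M →
      (H.neighborFinset z).card
        = ∑ p ∈ M, ((H.neighborFinset z) ∩ ({p.1, p.2} : Finset α)).card := by
    intro z hz
    have hsub := hNsub z hz
    have heq : H.neighborFinset z
        = M.biUnion (fun p => (H.neighborFinset z) ∩ ({p.1, p.2} : Finset α)) := by
      ext w
      simp only [Finset.mem_biUnion, Finset.mem_inter, Finset.mem_insert, Finset.mem_singleton]
      constructor
      · intro hw
        obtain ⟨p, hp, hwp⟩ := mem_mSet.1 (hsub hw)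
        exact ⟨p, hp, hw, hwp⟩
      · rintro ⟨p, _, hw, _⟩
        exact hw
    have hdisj : ∀ p ∈ M, ∀ q ∈ M, p ≠ q →
        Disjoint ((H.neighborFinset z) ∩ ({p.1, p.2} : Finset α))
          ((H.neighborFinset z) ∩ ({q.1, q.2} : Finset α)) := by
      intro p hp q hq hpq
      have hd := hM.2 p hp q hq hpq
      rw [Finset.disjoint_left]
      intro w hw1 hw2
      simp only [Finset.mem_inter, Finset.mem_insert, Finset.mem_singleton] at hw1 hw2
      rcases hw1.2 with rfl | rfl <;> rcases hw2.2 with h | h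
      exacts [hd.1 h, hd.2.1 h, hd.2.2.1 h, hd.2.2.2 h]
    calc (H.neighborFinset z).card
        = (M.biUnion (fun p => (H.neighborFinset z) ∩ ({p.1, p.2} : Finset α))).card := by
          rw [← heq]
      _ = _ := Finset.card_biUnion hdisj
  have hbig : ∃ p ∈ M, 3 ≤ ((H.neighborFinset u) ∩ ({p.1, p.2} : Finset α)).card
      + ((H.neighborFinset v) ∩ ({p.1, p.2} : Finset α)).card := by
    by_contra hall
    push_neg at hall
    have hle : ∑ p ∈ M, (((H.neighborFinset u) ∩ ({p.1, p.2} : Finset α)).card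
        + ((H.neighborFinset v) ∩ ({p.1, p.2} : Finset α)).card) ≤ 2 * M.card := by
      calc _ ≤ ∑ _p ∈ M, 2 := Finset.sum_le_sum (fun p hp => by have := hall p hp; omega)
        _ = 2 * M.card := by rw [Finset.sum_const, smul_eq_mul, mul_comm]
    rw [Finset.sum_add_distrib] at hle
    rw [← hcover u hu', ← hcover v hv'] at hle
    have h1 := hdeg u
    have h2 := hdeg v
    simp only [SimpleGraph.degree] at h1 h2
    omega
  obtain ⟨p, hp, hge⟩ := hbig
  have hxy : p.1 ≠ p.2 := (hM.1 p hp).ne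
  rw [cnt H u p.1 p.2 hxy, cnt H v p.1 p.2 hxy] at hge
  by_cases h1 : H.Adj u p.1 <;> by_cases h2 : H.Adj u p.2 <;>
    by_cases h3 : H.Adj v p.1 <;> by_cases h4 : H.Adj v p.2 <;>
    simp only [h1, h2, h3, h4, if_true, if_false] at hge
  all_goals first
    | omega
    | exact augment_s13 hM hmax hu' hv' huv hp (Or.inl rfl) (Or.inr rfl) hxy h1 h4
    | exact augment_s13 hM hmax hu' hv' huv hp (Or.inr rfl) (Or.inl rfl) hxy.symm h2 h3

lemma containsMatching {H : SimpleGraph α} {s : ℕ} {M : Finset (α × α)}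
    (hM : IsM H M) (hc : M.card = s) :
    ∃ F : Fin s × Fin 2 ↪ α, ∀ a b, (matchingGraph s).Adj a b → H.Adj (F a) (F b) := by
  have e : Fin s ≃ {x // x ∈ M} := ((M.equivFin).trans (finCongr hc)).symm
  have h2 : ∀ j : Fin 2, j = 0 ∨ j = 1 := by decide
  set g : Fin s × Fin 2 → α :=
    fun q => if q.2 = 0 then ((e q.1 : α × α)).1 else ((e q.1 : α × α)).2 with hg
  have hpmem : ∀ i : Fin s, ((e i : α × α)) ∈ M := fun i => (e i).2
  have hdiff : ∀ i i' : Fin s, i ≠ i' → (e i : α × α) ≠ (e i' : α × α) := by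
    intro i i' hii h
    exact hii (e.injective (Subtype.ext h))
  have hadj : ∀ i : Fin s, H.Adj (e i : α × α).1 (e i : α × α).2 :=
    fun i => hM.1 _ (hpmem i)
  have hinj : Function.Injective g := by
    intro q q' h
    by_cases hq1 : q.1 = q'.1
    · rcases h2 q.2 with hj | hj <;> rcases h2 q'.2 with hj' | hj' <;>
        simp only [hg, hq1, hj, hj'] at h ⊢
      · exact Prod.ext hq1 (hj.trans hj'.symm)
      · exact absurd h (hadj q'.1).ne
      · exact absurd h.symm (hadj q'.1).ne
      · exact Prod.ext hq1 (hj.trans hj'.symm)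
    · exfalso
      have hd := hM.2 _ (hpmem q.1) _ (hpmem q'.1) (hdiff _ _ hq1)
      rcases h2 q.2 with hj | hj <;> rcases h2 q'.2 with hj' | hj' <;>
        simp only [hg, hj, hj', if_pos rfl, if_neg (by simp : ¬(1 : Fin 2) = 0)] at h
      exacts [hd.1 h, hd.2.1 h, hd.2.2.1 h, hd.2.2.2 h]
  refine ⟨⟨g, hinj⟩, ?_⟩
  intro a b hab
  rw [matchingGraph, SimpleGraph.fromRel_adj] at hab
  obtain ⟨hne, hfst⟩ := hab
  have hfst : a.1 = b.1 := by tauto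
  have hsnd : a.2 ≠ b.2 := fun h => hne (Prod.ext hfst h)
  simp only [Function.Embedding.coeFn_mk]
  rcases h2 a.2 with hj | hj <;> rcases h2 b.2 with hj' | hj'
  · exact absurd (hj.trans hj'.symm) hsnd
  · simp only [hg, hj, hj', if_pos rfl, if_neg (by simp : ¬(1 : Fin 2) = 0), hfst]
    exact hadj b.1
  · simp only [hg, hj, hj', if_pos rfl, if_neg (by simp : ¬(1 : Fin 2) = 0), hfst]
    exact (hadj b.1).symm
  · exact absurd (hj.trans hj'.symm) hsnd

end Aux

/-- If `δ(H) ≥ s`, then in any `M_s`-free graph `G` every copy of `H` lies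
inside a set of at most `2s - 1` vertices of `G`. -/
theorem stmt13 {α V : Type*} [Fintype α] [Fintype V] (H : SimpleGraph α) (s : ℕ)
    (hdeg : ∀ v, s ≤ deg H v) (G : SimpleGraph V) (hG : _root_.Free (matchingGraph s) G)
    (f : α ↪ V) (hf : ∀ a b, H.Adj a b → G.Adj (f a) (f b)) :
    ∃ S : Finset V, S.card ≤ 2 * s - 1 ∧ ∀ a : α, f a ∈ S := by
  classical
  rcases Nat.eq_zero_or_pos s with rfl | hs
  · exact absurd ⟨Function.Embedding.ofIsEmpty, fun a b h => isEmptyElim a⟩ hG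
  have hdeg' : ∀ v, s ≤ H.degree v := by
    intro v
    have h := hdeg v
    have hset : (H.neighborSet v).ncard = (H.neighborFinset v).card := by
      rw [← Set.ncard_coe_finset]
      congr 1
      ext w
      simp [SimpleGraph.mem_neighborFinset, SimpleGraph.mem_neighborSet]
    rw [deg, hset] at h
    exact h
  have hn : Fintype.card α ≤ 2 * s - 1 := by
    by_contra hC
    push_neg at hC
    have h2s : 2 * s ≤ Fintype.card α := by omega
    obtain ⟨M, hM, hc⟩ := key_s13 H s hdeg' h2s
    obtain ⟨F, hF⟩ := containsMatching hM hc
    exact hG ⟨F.trans f, fun a b h => hf _ _ (hF a b h)⟩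
  refine ⟨Finset.univ.image f, ?_, fun a => Finset.mem_image_of_mem f (Finset.mem_univ a)⟩
  rw [Finset.card_image_of_injective _ f.injective, Finset.card_univ]
  exact hn
end

section
/- If G is an n-vertex M_s-free graph with a Berge–Tutte partition into a set A and odd components G_1,…,G_m, then the graph obtained from G by adding all edges incident to vertices of A and all edges inside each component G_i is still M_s-free. -/
open SimpleGraph Filter Finset

/-- The weight of a candidate Berge–Tutte partition: `|B| + Σ_i (|V(G_i)|-1)/2`,
the sum over the connected components of `G - B`. -/
noncomputable def btWeight {V : Type*} (G : SimpleGraph V) (B : Set V) : ℕ :=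
  B.ncard + ∑ᶠ c : ((⊤ : G.Subgraph).deleteVerts B).coe.ConnectedComponent, (c.supp.ncard - 1) / 2

/-- A Berge–Tutte partition witnessing that `G` is `M_s`-free: every component of
`G - B` has odd order and `|B| + Σ_i (|V(G_i)|-1)/2 ≤ s - 1`. -/
def IsBTPartition {V : Type*} (G : SimpleGraph V) (s : ℕ) (B : Set V) : Prop :=
  (∀ c : ((⊤ : G.Subgraph).deleteVerts B).coe.ConnectedComponent, Odd c.supp.ncard) ∧
  btWeight G B ≤ s - 1


/-- The graph obtained from `G` by adding all edges incident to `B` and all edges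
inside each connected component of `G - B`. -/
def augment {V : Type*} (G : SimpleGraph V) (B : Set V) : SimpleGraph V :=
  SimpleGraph.fromRel (fun x y => G.Adj x y ∨ x ∈ B ∨ y ∈ B ∨
    ∃ (hx : x ∈ ((⊤ : G.Subgraph).deleteVerts B).verts)
      (hy : y ∈ ((⊤ : G.Subgraph).deleteVerts B).verts),
      ((⊤ : G.Subgraph).deleteVerts B).coe.Reachable ⟨x, hx⟩ ⟨y, hy⟩)

set_option maxHeartbeats 1000000 in
/-- Filling up a Berge–Tutte partition keeps the graph `M_s`-free. -/
theorem stmt16 {V : Type*} [Fintype V] (G : SimpleGraph V) (s : ℕ) (hs : 1 ≤ s)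
    (hG : _root_.Free (matchingGraph s) G) (B : Set V) (hB : IsBTPartition G s B) :
    _root_.Free (matchingGraph s) (augment G B) := by
  classical
  rintro ⟨f, hf⟩
  set D := ((⊤ : G.Subgraph).deleteVerts B).coe with hD
  -- each matching edge is an edge of the augmented graph
  have hadj : ∀ i : Fin s, (augment G B).Adj (f (i, 0)) (f (i, 1)) := by
    intro i
    apply hf
    simp [matchingGraph, SimpleGraph.fromRel_adj]
  have hmem : ∀ x : V, x ∉ B → x ∈ ((⊤ : G.Subgraph).deleteVerts B).verts := by
    intro x hx
    simp [SimpleGraph.Subgraph.deleteVerts_verts, hx]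
  -- key dichotomy
  have hkey : ∀ i : Fin s, (f (i, 0) ∈ B ∨ f (i, 1) ∈ B) ∨
      ∃ (h0 : f (i, 0) ∈ ((⊤ : G.Subgraph).deleteVerts B).verts)
        (h1 : f (i, 1) ∈ ((⊤ : G.Subgraph).deleteVerts B).verts),
        D.Reachable ⟨f (i, 0), h0⟩ ⟨f (i, 1), h1⟩ := by
    intro i
    have h := hadj i
    rw [augment, SimpleGraph.fromRel_adj] at h
    by_cases hb0 : f (i, 0) ∈ B
    · exact Or.inl (Or.inl hb0)
    by_cases hb1 : f (i, 1) ∈ B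
    · exact Or.inl (Or.inr hb1)
    right
    refine ⟨hmem _ hb0, hmem _ hb1, ?_⟩
    rcases h.2 with (hGadj | hb | hb | ⟨hx, hy, hr⟩) | (hGadj | hb | hb | ⟨hx, hy, hr⟩)
    · -- G.Adj (f (i,0)) (f (i,1))
      exact SimpleGraph.Adj.reachable (by
        simp [hD, SimpleGraph.Subgraph.coe_adj, SimpleGraph.Subgraph.deleteVerts_adj, hb0, hb1,
          hGadj])
    · exact absurd hb hb0
    · exact absurd hb hb1
    · exact hr
    · exact SimpleGraph.Adj.reachable (by
        simp [hD, SimpleGraph.Subgraph.coe_adj, SimpleGraph.Subgraph.deleteVerts_adj, hb0, hb1,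
          hGadj.symm])
    · exact absurd hb hb1
    · exact absurd hb hb0
    · exact (hr.symm : _)
  -- split the matching edges
  set T1 : Finset (Fin s) := Finset.univ.filter (fun i => f (i, 0) ∈ B ∨ f (i, 1) ∈ B) with hT1
  set T2 : Finset (Fin s) := Finset.univ.filter (fun i => ¬ (f (i, 0) ∈ B ∨ f (i, 1) ∈ B)) with hT2
  have hsplit : T1.card + T2.card = s := by
    rw [hT1, hT2, Finset.card_filter_add_card_filter_not]
    simp
  -- edges touching B
  have h1 : T1.card ≤ B.ncard := by
    rw [Set.ncard_eq_toFinset_card']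
    apply Finset.card_le_card_of_injOn (fun i => if f (i, 0) ∈ B then f (i, 0) else f (i, 1))
    · intro i hi
      rw [Finset.mem_coe, hT1, Finset.mem_filter] at hi
      rcases hi.2 with h | h
      · simp [h]
      · by_cases h0 : f (i, 0) ∈ B <;> simp [h0, h]
    · intro i hi j hj hij
      simp only at hij
      by_cases h0 : f (i, 0) ∈ B <;> by_cases h0' : f (j, 0) ∈ B <;>
        simp only [h0, h0', if_pos, if_neg, if_true, if_false] at hij <;>
        · have := f.injective hij
          simpa using congrArg Prod.fst this
  -- edges inside components
  by_cases hne : Nonempty D.ConnectedComponent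
  · haveI : Fintype D.ConnectedComponent := Fintype.ofFinite _
    set comp : Fin s → D.ConnectedComponent := fun i =>
      if h : f (i, 0) ∈ ((⊤ : G.Subgraph).deleteVerts B).verts then
        D.connectedComponentMk ⟨f (i, 0), h⟩
      else Classical.arbitrary _ with hcomp
    have hcompdef : ∀ (i : Fin s) (h : f (i, 0) ∈ ((⊤ : G.Subgraph).deleteVerts B).verts),
        comp i = D.connectedComponentMk ⟨f (i, 0), h⟩ := by
      intro i h
      rw [hcomp]
      exact dif_pos h
    have h2 : ∀ c : D.ConnectedComponent,
        (T2.filter (fun i => comp i = c)).card ≤ (c.supp.ncard - 1) / 2 := by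
      intro c
      set F := T2.filter (fun i => comp i = c) with hF
      have hinj : (F ×ˢ (Finset.univ : Finset (Fin 2))).card ≤
          ((Subtype.val '' (c.supp : Set _)) : Set V).toFinset.card := by
        apply Finset.card_le_card_of_injOn (fun p => f p)
        · rintro ⟨i, e⟩ hp
          rw [Finset.mem_coe, Finset.mem_product, hF, Finset.mem_filter] at hp
          obtain ⟨⟨hiT2, hic⟩, -⟩ := hp
          rw [hT2, Finset.mem_filter] at hiT2
          push_neg at hiT2
          obtain ⟨-, hb0, hb1⟩ := hiT2
          rcases hkey i with h | ⟨h0, h1, hr⟩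
          · tauto
          have hc0 : D.connectedComponentMk ⟨f (i, 0), h0⟩ = c := by
            rw [← hcompdef i h0]; exact hic
          have hc1 : D.connectedComponentMk ⟨f (i, 1), h1⟩ = c := by
            rw [← hc0]
            exact (SimpleGraph.ConnectedComponent.sound hr.symm)
          rw [Finset.mem_coe, Set.mem_toFinset]
          fin_cases e
          · exact ⟨⟨f (i, 0), h0⟩, hc0, rfl⟩
          · exact ⟨⟨f (i, 1), h1⟩, hc1, rfl⟩
        · rintro ⟨i, e⟩ - ⟨j, e'⟩ - hij
          exact f.injective hij
      have hcard : (F ×ˢ (Finset.univ : Finset (Fin 2))).card = F.card * 2 := by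
        rw [Finset.card_product]; simp
      have himg : ((Subtype.val '' (c.supp : Set _)) : Set V).toFinset.card = c.supp.ncard := by
        rw [← Set.ncard_eq_toFinset_card']
        exact Set.ncard_image_of_injective _ Subtype.val_injective
      obtain ⟨m, hm⟩ := hB.1 c
      omega
    have h2' : T2.card ≤ ∑ c : D.ConnectedComponent, (c.supp.ncard - 1) / 2 := by
      rw [Finset.card_eq_sum_card_fiberwise (f := comp) (t := Finset.univ) (fun i _ => Finset.mem_univ _)]
      exact Finset.sum_le_sum (fun c _ => h2 c)
    have hbt : btWeight G B = B.ncard + ∑ c : D.ConnectedComponent, (c.supp.ncard - 1) / 2 := by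
      rw [btWeight, finsum_eq_sum_of_fintype]
    have := hB.2
    omega
  · -- no components: T2 must be empty
    have hT2e : T2 = ∅ := by
      rw [Finset.eq_empty_iff_forall_notMem]
      intro i hi
      rw [hT2, Finset.mem_filter] at hi
      push_neg at hi
      exact hne ⟨D.connectedComponentMk ⟨f (i, 0), hmem _ hi.2.1⟩⟩
    have := hB.2
    have hble : B.ncard ≤ btWeight G B := Nat.le_add_right _ _
    rw [hT2e, Finset.card_empty] at hsplit
    omega
end
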